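/- Let G be a finite simple graph that is {diamond, K2 ∪ 2K1}-free and such that both G and its complement Ḡ are connected. If U is a homogeneous set of G that contains two adjacent vertices, then the complement Ḡ is bipartite; equivalently, the vertex set of G can be partitioned into two cliques. -/

import Mathlib

open SimpleGraph

/-- `G` is `H`-free: no induced subgraph of `G` is isomorphic to `H`
(an induced copy is a graph embedding). -/
def InducedFree {α β : Type*} (H : SimpleGraph β) (G : SimpleGraph α) : Prop :=
  ¬ Nonempty (H ↪g G)

/-- The diamond: `K4` minus the edge `2-3`. -/
def diamond : SimpleGraph (Fin 4) :=
  fromEdgeSet {s(0,1), s(0,2), s(0,3), s(1,2), s(1,3)}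

/-- `K2 ∪ 2K1`: one edge `0-1` together with two isolated vertices `2,3`
(the complement of the diamond). -/
def K2u2K1 : SimpleGraph (Fin 4) := fromEdgeSet {s(0,1)}

/-- `U` is a homogeneous set of `G`: `2 ≤ |U| ≤ |V| − 1` and every vertex
outside `U` is adjacent to all of `U` or to none of `U`. -/
def IsHomogeneousSet {V : Type*} [Fintype V] (G : SimpleGraph V) (U : Set V) : Prop :=
  2 ≤ U.ncard ∧ U.ncard ≤ Fintype.card V - 1 ∧
    ∀ v ∉ U, (∀ u ∈ U, G.Adj v u) ∨ (∀ u ∈ U, ¬ G.Adj v u)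

/-- `G` is bipartite: its vertex set can be partitioned into two independent sets. -/
def IsBipartite {V : Type*} (G : SimpleGraph V) : Prop :=
  ∃ A : Set V, ∀ u v : V, G.Adj u v → ((u ∈ A ∧ v ∉ A) ∨ (u ∉ A ∧ v ∈ A))

/-! Let `xy` be an edge inside `U`. Every vertex outside `U` is complete (the set `T`) or
anticomplete (the set `S`) to `U`. In a diamond-free graph the common neighbours of an edge form a
clique, so `T` is a clique; dually, in a `K2 ∪ 2K1`-free graph the common non-neighbours of an edge
form a clique, so `S` is a clique. Connectivity of `G` and of `Gᶜ` provides some `t ∈ T` and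
`s ∈ S`. Through `t`, the neighbours inside `U` of any vertex of `U` form a clique; through `s`,
every vertex of `U` is adjacent to an end of every edge of `U`. These two properties force `U`,
which has an edge, to be a clique. Hence `U ∪ T` and `S` are two cliques covering `V`. -/

section InducedFree

variable {V β : Type*} {G : SimpleGraph V} {H : SimpleGraph β}

theorem InducedFree.not_adj_iff (h : InducedFree H G) {f : β → V} (hf : f.Injective) :
    ¬ ∀ i j, G.Adj (f i) (f j) ↔ H.Adj i j :=
  fun hadj => h ⟨⟨⟨f, hf⟩, hadj _ _⟩⟩

theorem InducedFree.isClique_commonNeighbors (h : InducedFree diamond G) {a b : V}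
    (hab : G.Adj a b) : G.IsClique (G.commonNeighbors a b) := by
  intro c hc d hd hcd
  by_contra hncd
  obtain ⟨hac, hbc⟩ := G.mem_commonNeighbors.mp hc
  obtain ⟨had, hbd⟩ := G.mem_commonNeighbors.mp hd
  refine h.not_adj_iff (f := ![a, b, c, d]) (fun i j hij => ?_) fun i j => ?_
  · fin_cases i <;> fin_cases j <;> simp_all [G.ne_of_adj, Ne.symm]
  · fin_cases i <;> fin_cases j <;> simp_all [diamond, G.adj_comm]

theorem InducedFree.isClique_compl_commonNeighbors (h : InducedFree K2u2K1 G) {a b : V}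
    (hab : G.Adj a b) : G.IsClique (Gᶜ.commonNeighbors a b) := by
  intro c hc d hd hcd
  by_contra hncd
  obtain ⟨⟨hac, nac⟩, hbc, nbc⟩ := hc
  obtain ⟨⟨had, nad⟩, hbd, nbd⟩ := hd
  refine h.not_adj_iff (f := ![a, b, c, d]) (fun i j hij => ?_) fun i j => ?_
  · fin_cases i <;> fin_cases j <;> simp_all [G.ne_of_adj, Ne.symm]
  · fin_cases i <;> fin_cases j <;> simp_all [K2u2K1, G.adj_comm]

end InducedFree

section Clique

variable {V : Type*} {G : SimpleGraph V} {U : Set V}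

theorem mem_compl_commonNeighbors_of_forall_not_adj {s : V} (hsU : s ∉ U)
    (hs : ∀ u ∈ U, ¬ G.Adj s u) {a b : V} (ha : a ∈ U) (hb : b ∈ U) :
    s ∈ Gᶜ.commonNeighbors a b :=
  ⟨⟨fun has => hsU (has ▸ ha), fun has => hs a ha has.symm⟩,
    fun hbs => hsU (hbs ▸ hb), fun hbs => hs b hb hbs.symm⟩

theorem InducedFree.isClique_inter_neighborSet (h : InducedFree diamond G) {t : V}
    (ht : ∀ u ∈ U, G.Adj t u) {w : V} (hw : w ∈ U) : G.IsClique (U ∩ G.neighborSet w) :=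
  (h.isClique_commonNeighbors (ht w hw)).subset fun _ ⟨hu, hwu⟩ =>
    G.mem_commonNeighbors.mpr ⟨ht _ hu, hwu⟩

theorem InducedFree.adj_or_adj_of_adj (h : InducedFree K2u2K1 G) {s : V} (hsU : s ∉ U)
    (hs : ∀ u ∈ U, ¬ G.Adj s u) {a b c : V} (ha : a ∈ U) (hb : b ∈ U) (hc : c ∈ U)
    (hab : G.Adj a b) (hca : c ≠ a) (hcb : c ≠ b) : G.Adj a c ∨ G.Adj b c := by
  by_contra! hnadj
  have hcs : c ≠ s := fun hcs => hsU (hcs ▸ hc)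
  have hc' : c ∈ Gᶜ.commonNeighbors a b := ⟨⟨hca.symm, hnadj.1⟩, hcb.symm, hnadj.2⟩
  exact hs c hc (h.isClique_compl_commonNeighbors hab hc'
    (mem_compl_commonNeighbors_of_forall_not_adj hsU hs ha hb) hcs).symm

theorem isClique_of_dominating_edges (hnbr : ∀ w ∈ U, G.IsClique (U ∩ G.neighborSet w))
    (hdom : ∀ a ∈ U, ∀ b ∈ U, ∀ c ∈ U, G.Adj a b → c ≠ a → c ≠ b → G.Adj a c ∨ G.Adj b c)
    {x y : V} (hx : x ∈ U) (hy : y ∈ U) (hxy : G.Adj x y) : G.IsClique U := by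
  have hexists_nbr : ∀ u ∈ U, ∃ a ∈ U, G.Adj u a := by
    intro u hu
    by_cases hux : u = x
    · exact ⟨y, hy, hux ▸ hxy⟩
    by_cases huy : u = y
    · exact ⟨x, hx, huy ▸ hxy.symm⟩
    rcases hdom x hx y hy u hu hxy hux huy with hxu | hyu
    exacts [⟨x, hx, hxu.symm⟩, ⟨y, hy, hyu.symm⟩]
  intro u hu u' hu' hne
  by_contra hnadj
  obtain ⟨a, ha, hua⟩ := hexists_nbr u hu
  have hu'a : u' ≠ a := by rintro rfl; exact hnadj hua
  have hau' : G.Adj a u' := (hdom u hu a ha u' hu' hua hne.symm hu'a).resolve_left hnadj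
  exact hnadj (hnbr a ha ⟨hu, hua.symm⟩ ⟨hu', hau'⟩ hne)

theorem isBipartite_compl_of_isClique {A : Set V} (hA : G.IsClique A) (hAc : G.IsClique Aᶜ) :
    _root_.IsBipartite Gᶜ := by
  refine ⟨A, fun u v ⟨hne, hnadj⟩ => ?_⟩
  by_cases hu : u ∈ A <;> by_cases hv : v ∈ A
  · exact absurd (hA hu hv hne) hnadj
  · exact .inl ⟨hu, hv⟩
  · exact .inr ⟨hu, hv⟩
  · exact absurd (hAc hu hv hne) hnadj

end Clique

namespace IsHomogeneousSet

variable {V : Type*} [Fintype V] {G : SimpleGraph V} {U : Set V}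

theorem nonempty (hU : IsHomogeneousSet G U) : U.Nonempty :=
  Set.nonempty_of_ncard_ne_zero (by have := hU.1; omega)

theorem exists_notMem (hU : IsHomogeneousSet G U) : ∃ v, v ∉ U := by
  by_contra! hall
  have hcard := hU.2.1
  rw [Set.eq_univ_of_forall hall, Set.ncard_univ, Nat.card_eq_fintype_card] at hcard
  have : 0 < Fintype.card V := Fintype.card_pos_iff.2 ⟨hU.nonempty.some⟩
  omega

theorem compl (hU : IsHomogeneousSet G U) : IsHomogeneousSet Gᶜ U := by
  refine ⟨hU.1, hU.2.1, fun v hv => ?_⟩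
  rcases hU.2.2 v hv with hall | hnone
  · exact .inr fun u hu hvu => hvu.2 (hall u hu)
  · exact .inl fun u hu => ⟨fun hvu => hv (hvu ▸ hu), hnone u hu⟩

theorem exists_forall_adj (hU : IsHomogeneousSet G U) (hG : G.Connected) :
    ∃ t ∉ U, ∀ u ∈ U, G.Adj t u := by
  obtain ⟨x, hx⟩ := hU.nonempty
  obtain ⟨v, hv⟩ := hU.exists_notMem
  obtain ⟨d, -, hd, hd'⟩ := (hG.preconnected x v).some.exists_boundary_dart U hx hv
  refine ⟨d.snd, hd', (hU.2.2 _ hd').resolve_right fun hnone => ?_⟩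
  exact hnone _ hd d.adj.symm

theorem exists_forall_not_adj (hU : IsHomogeneousSet G U) (hG : Gᶜ.Connected) :
    ∃ s ∉ U, ∀ u ∈ U, ¬ G.Adj s u := by
  obtain ⟨s, hs, hall⟩ := hU.compl.exists_forall_adj hG
  exact ⟨s, hs, fun u hu => (hall u hu).2⟩

end IsHomogeneousSet

theorem diamond_codiamond_free_homogeneous_clique {V : Type*} [Fintype V]
    (G : SimpleGraph V) (hconn : G.Connected) (hcoconn : Gᶜ.Connected)
    (hdiamond : InducedFree diamond G) (hcodiamond : InducedFree K2u2K1 G)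
    (U : Set V) (hU : IsHomogeneousSet G U)
    (hadj : ∃ x ∈ U, ∃ y ∈ U, G.Adj x y) :
    _root_.IsBipartite Gᶜ := by
  obtain ⟨x, hx, y, hy, hxy⟩ := hadj
  obtain ⟨t, -, ht⟩ := hU.exists_forall_adj hconn
  obtain ⟨s, hsU, hs⟩ := hU.exists_forall_not_adj hcoconn
  have hUclique : G.IsClique U :=
    isClique_of_dominating_edges (fun _ => hdiamond.isClique_inter_neighborSet ht)
      (fun _ ha _ hb _ hc => hcodiamond.adj_or_adj_of_adj hsU hs ha hb hc) hx hy hxy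
  set T := {v | ∀ u ∈ U, G.Adj v u}
  have hTclique : G.IsClique T := (hdiamond.isClique_commonNeighbors hxy).subset
    fun v hv => G.mem_commonNeighbors.mpr ⟨(hv x hx).symm, (hv y hy).symm⟩
  refine isBipartite_compl_of_isClique (A := U ∪ T) ?_ ?_
  · exact Set.pairwise_union.mpr
      ⟨hUclique, hTclique, fun u hu v hv _ => ⟨(hv u hu).symm, hv u hu⟩⟩
  · refine (hcodiamond.isClique_compl_commonNeighbors hxy).subset fun v hv => ?_
    simp only [Set.mem_compl_iff, Set.mem_union, not_or] at hv
    exact mem_compl_commonNeighbors_of_forall_not_adj hv.1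
      ((hU.2.2 v hv.1).resolve_left hv.2) hx hy
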